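/- For all integers j, k with 2 ≤ j < k, consider the election E(j,k) and the committees W = D_{k−2} ∪ {x, a} and W' = D_{k−2} ∪ {y, b}. Then Δ(W, a, b) = δ(j,k) > 0, so (a,b) is a PAV-score-improving swap for W; moreover Δ(W', b, a) = δ(j,k) > 0, so (b,a) is a PAV-score-improving swap for W'. -/
import Mathlib


/-- PAV score of committee `W` for an election whose voters are given by a list of
ballots (one list entry per voter). -/
def pavscL {C : Type*} [DecidableEq C] (ballots : List (Finset C)) (W : Finset C) : ℚ :=
  (ballots.map (fun A => ∑ j ∈ Finset.range ((A ∩ W).card), (1 : ℚ) / (j + 1))).sum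

/-- `Δ(W,a,b) = pavsc((W ∖ {a}) ∪ {b}) − pavsc(W)` for a list-encoded election. -/
def pavDeltaL {C : Type*} [DecidableEq C] (ballots : List (Finset C)) (W : Finset C)
    (a b : C) : ℚ :=
  pavscL ballots (insert b (W.erase a)) - pavscL ballots W

/-- Candidates: dummy candidates `d i`, the special candidates `a`, `b`, `x`, `y`,
and the chain candidates `c i`. -/
inductive Cand : Type
  | d : ℕ → Cand
  | a : Cand
  | b : Cand
  | x : Cand
  | y : Cand
  | c : ℕ → Cand
  deriving DecidableEq

/-- The set `D_ℓ = {d_1, …, d_ℓ}` of dummy candidates. -/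
def Dset (ℓ : ℕ) : Finset Cand := (Finset.Icc 1 ℓ).image Cand.d

/-- The relabelling exchanging the candidates `a` and `b`. -/
def swapAB : Cand → Cand
  | Cand.a => Cand.b
  | Cand.b => Cand.a
  | z => z

/-- The ballots of the election `F(j,k)` (candidate set `D_{k−1} ∪ {a,b}`, committee
size `k`): `F(1,k)` has two voters with ballots `D_{k−1} ∪ {a}` and `D_{k−2} ∪ {b}`;
`F(j,k)` for `j > 1` is the disjoint union of `F(j−1,k)` with `a,b` exchanged and
`F(j−1,k−1)` (whose candidates `a₂,b₂` are renamed to `a,b`). -/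
def Fballots : ℕ → ℕ → List (Finset Cand)
  | 0, _ => []
  | 1, k => [Dset (k - 1) ∪ {Cand.a}, Dset (k - 2) ∪ {Cand.b}]
  | (j + 2), k =>
      (Fballots (j + 1) k).map (Finset.image swapAB) ++ Fballots (j + 1) (k - 1)

/-- The ballots of the election `E(j,k)` (candidate set `D_{k−2} ∪ {x,y} ∪ {a,b}`,
committee size `k`): two disjoint copies of `F(j−1,k−1)`; in the first copy `a,b` are
exchanged and `x` is added to each ballot, in the second copy `y` is added to each
ballot. The natural bijection `s` sends the voter with index `v < 2^(j−1)` (first copy)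
to the voter with index `v + 2^(j−1)` (second copy). -/
def Eballots (j k : ℕ) : List (Finset Cand) :=
  (Fballots (j - 1) (k - 1)).map (fun A => insert Cand.x (A.image swapAB)) ++
  (Fballots (j - 1) (k - 1)).map (fun A => insert Cand.y A)

/-- `δ(j,k) = j! / ∏_{j'=0}^{j} (k − j')`. -/
def deltaFn (j k : ℕ) : ℚ :=
  (Nat.factorial j : ℚ) / ∏ j' ∈ Finset.range (j + 1), ((k : ℚ) - (j' : ℚ))

lemma swapAB_invol : ∀ z, swapAB (swapAB z) = z := by intro z; cases z <;> rfl

lemma swapAB_inj : Function.Injective swapAB :=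
  Function.Involutive.injective swapAB_invol

lemma mem_Dset {z : Cand} {m : ℕ} (h : z ∈ Dset m) :
    z ≠ Cand.a ∧ z ≠ Cand.b ∧ z ≠ Cand.x ∧ z ≠ Cand.y := by
  simp only [Dset, Finset.mem_image] at h
  obtain ⟨i, _, rfl⟩ := h
  simp

lemma a_not_Dset (m : ℕ) : Cand.a ∉ Dset m := fun h => (mem_Dset h).1 rfl
lemma b_not_Dset (m : ℕ) : Cand.b ∉ Dset m := fun h => (mem_Dset h).2.1 rfl
lemma x_not_Dset (m : ℕ) : Cand.x ∉ Dset m := fun h => (mem_Dset h).2.2.1 rfl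
lemma y_not_Dset (m : ℕ) : Cand.y ∉ Dset m := fun h => (mem_Dset h).2.2.2 rfl

lemma card_Dset (m : ℕ) : (Dset m).card = m := by
  rw [Dset, Finset.card_image_of_injective _ (fun i j h => by injection h)]
  simp

lemma Dset_mono {m m' : ℕ} (h : m ≤ m') : Dset m ⊆ Dset m' :=
  Finset.image_subset_image (Finset.Icc_subset_Icc_right h)

lemma image_swapAB_Dset (m : ℕ) : (Dset m).image swapAB = Dset m := by
  rw [Dset, Finset.image_image]
  exact Finset.image_congr (fun i _ => rfl)

lemma image_swapAB_insert_a (m : ℕ) :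
    (insert Cand.a (Dset m)).image swapAB = insert Cand.b (Dset m) := by
  rw [Finset.image_insert, image_swapAB_Dset]; rfl

lemma image_swapAB_insert_b (m : ℕ) :
    (insert Cand.b (Dset m)).image swapAB = insert Cand.a (Dset m) := by
  rw [Finset.image_insert, image_swapAB_Dset]; rfl

lemma card_swap_a (A : Finset Cand) (m : ℕ) :
    (A.image swapAB ∩ insert Cand.a (Dset m)).card = (A ∩ insert Cand.b (Dset m)).card := by
  rw [← image_swapAB_insert_b, ← Finset.image_inter _ _ swapAB_inj,
    Finset.card_image_of_injective _ swapAB_inj]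

lemma card_swap_b (A : Finset Cand) (m : ℕ) :
    (A.image swapAB ∩ insert Cand.b (Dset m)).card = (A ∩ insert Cand.a (Dset m)).card := by
  rw [← image_swapAB_insert_a, ← Finset.image_inter _ _ swapAB_inj,
    Finset.card_image_of_injective _ swapAB_inj]

lemma swap_mem_cl {z : Cand} {m : ℕ} (h : z ∈ Dset m ∪ {Cand.a, Cand.b}) :
    swapAB z ∈ Dset m ∪ {Cand.a, Cand.b} := by
  rcases Finset.mem_union.mp h with h | h
  · obtain ⟨i, hi, rfl⟩ := Finset.mem_image.mp h
    exact Finset.mem_union_left _ (Finset.mem_image.mpr ⟨i, hi, rfl⟩)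
  · rcases Finset.mem_insert.mp h with rfl | h
    · exact Finset.mem_union_right _ (by simp [swapAB])
    · rw [Finset.mem_singleton.mp h]
      exact Finset.mem_union_right _ (by simp [swapAB])

lemma Fballots_subset : ∀ j k : ℕ, ∀ A ∈ Fballots j k, A ⊆ Dset (k - 1) ∪ {Cand.a, Cand.b} := by
  intro j
  induction j with
  | zero => intro k A hA; simp [Fballots] at hA
  | succ n ih =>
    cases n with
    | zero =>
      intro k A hA
      simp only [Fballots, List.mem_cons, List.not_mem_nil, or_false] at hA
      rcases hA with rfl | rfl
      · apply Finset.union_subset (Finset.subset_union_left)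
        intro z hz; rw [Finset.mem_singleton.mp hz]; simp
      · apply Finset.union_subset
        · exact (Dset_mono (by omega)).trans Finset.subset_union_left
        · intro z hz; rw [Finset.mem_singleton.mp hz]; simp
    | succ m =>
      intro k A hA
      simp only [Fballots, List.mem_append, List.mem_map] at hA
      rcases hA with ⟨B, hB, rfl⟩ | hA
      · intro z hz
        obtain ⟨w, hw, rfl⟩ := Finset.mem_image.mp hz
        exact swap_mem_cl (ih k B hB hw)
      · have h1 := ih (k - 1) A hA
        rw [Nat.sub_sub] at h1
        exact h1.trans (Finset.union_subset_union_left (Dset_mono (by omega)))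

lemma prod_pos_aux {j k : ℕ} (h : j ≤ k) :
    0 < ∏ j' ∈ Finset.range j, ((k : ℚ) - (j' : ℚ)) := by
  apply Finset.prod_pos
  intro i hi
  have : i < k := by have := Finset.mem_range.mp hi; omega
  have : (i : ℚ) < (k : ℚ) := by exact_mod_cast this
  linarith

lemma deltaFn_pos {j k : ℕ} (h : j < k) : 0 < deltaFn j k :=
  div_pos (by exact_mod_cast Nat.factorial_pos j) (prod_pos_aux (by omega))

lemma deltaFn_rec (j k : ℕ) (h : j < k) :
    deltaFn (j + 1) (k + 1) = deltaFn j k - deltaFn j (k + 1) := by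
  unfold deltaFn
  have hQpos : 0 < ∏ i ∈ Finset.range j, ((k : ℚ) - (i : ℚ)) := prod_pos_aux (by omega)
  set Q := ∏ i ∈ Finset.range j, ((k : ℚ) - (i : ℚ)) with hQ
  have h1 : ∏ j' ∈ Finset.range (j + 1), ((k : ℚ) - (j' : ℚ)) = Q * ((k : ℚ) - (j : ℚ)) := by
    rw [Finset.prod_range_succ]
  have h2 : ∏ j' ∈ Finset.range (j + 1), (((k : ℚ) + 1) - (j' : ℚ)) = ((k : ℚ) + 1) * Q := by
    rw [Finset.prod_range_succ']
    simp only [Nat.cast_zero, sub_zero]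
    rw [mul_comm]
    congr 1
    apply Finset.prod_congr rfl
    intro i _
    push_cast
    ring
  have h3 : ∏ j' ∈ Finset.range (j + 1 + 1), (((k : ℚ) + 1) - (j' : ℚ))
      = ((k : ℚ) + 1) * (Q * ((k : ℚ) - (j : ℚ))) := by
    rw [Finset.prod_range_succ']
    simp only [Nat.cast_zero, sub_zero]
    rw [mul_comm]
    congr 1
    rw [← h1]
    apply Finset.prod_congr rfl
    intro i _
    push_cast
    ring
  push_cast
  rw [h1, h2, h3, Nat.factorial_succ]
  have hkj : ((k : ℚ) - (j : ℚ)) ≠ 0 := by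
    have : (j : ℚ) < (k : ℚ) := by exact_mod_cast h
    linarith
  have hk1 : ((k : ℚ) + 1) ≠ 0 := by positivity
  have hQ0 : Q ≠ 0 := ne_of_gt hQpos
  field_simp
  push_cast
  ring


def glist (L : List (Finset Cand)) (m : ℕ) : ℚ :=
  (L.map fun A => 1 / (((A ∩ insert Cand.a (Dset m)).card : ℚ) + 1)
      - 1 / (((A ∩ insert Cand.b (Dset m)).card : ℚ) + 1)).sum

lemma sum_map_neg {α : Type*} (L : List α) (f : α → ℚ) :
    (L.map fun a => -f a).sum = -(L.map f).sum := by
  induction L with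
  | nil => simp
  | cons a t ih => simp [ih]; ring

lemma glist_append (L1 L2 : List (Finset Cand)) (m : ℕ) :
    glist (L1 ++ L2) m = glist L1 m + glist L2 m := by
  unfold glist; rw [List.map_append, List.sum_append]

lemma glist_swap (L : List (Finset Cand)) (m : ℕ) :
    glist (L.map (Finset.image swapAB)) m = - glist L m := by
  unfold glist
  rw [List.map_map]
  rw [show ((fun A : Finset Cand => 1 / (((A ∩ insert Cand.a (Dset m)).card : ℚ) + 1)
      - 1 / (((A ∩ insert Cand.b (Dset m)).card : ℚ) + 1)) ∘ Finset.image swapAB)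
      = fun A : Finset Cand => -(1 / (((A ∩ insert Cand.a (Dset m)).card : ℚ) + 1)
      - 1 / (((A ∩ insert Cand.b (Dset m)).card : ℚ) + 1)) from
    funext fun A => by simp only [Function.comp, card_swap_a, card_swap_b]; ring]
  exact sum_map_neg _ _

lemma inter_insert_Dset_mono {A : Finset Cand} {m m' : ℕ} (h : m ≤ m')
    (hA : A ⊆ Dset m ∪ {Cand.a, Cand.b}) (v : Cand) :
    A ∩ insert v (Dset m') = A ∩ insert v (Dset m) := by
  ext z
  simp only [Finset.mem_inter, Finset.mem_insert]
  constructor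
  · rintro ⟨hz, hv | hD⟩
    · exact ⟨hz, Or.inl hv⟩
    · refine ⟨hz, Or.inr ?_⟩
      rcases Finset.mem_union.mp (hA hz) with hd | hab
      · exact hd
      · exfalso
        rcases Finset.mem_insert.mp hab with rfl | hb
        · exact (mem_Dset hD).1 rfl
        · exact (mem_Dset hD).2.1 (Finset.mem_singleton.mp hb)
  · rintro ⟨hz, hv | hD⟩
    · exact ⟨hz, Or.inl hv⟩
    · exact ⟨hz, Or.inr (Dset_mono h hD)⟩

lemma glist_congr_param {L : List (Finset Cand)} {m m' : ℕ} (h : m ≤ m')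
    (hL : ∀ A ∈ L, A ⊆ Dset m ∪ {Cand.a, Cand.b}) :
    glist L m' = glist L m := by
  unfold glist
  rw [List.map_congr_left]
  intro A hA
  rw [inter_insert_Dset_mono h (hL A hA) Cand.a, inter_insert_Dset_mono h (hL A hA) Cand.b]

lemma insert_inter_insert_card {v : Cand} {m : ℕ} (hv : v ≠ Cand.a) (hv' : v ≠ Cand.b)
    (hvD : v ∉ Dset m) : True := trivial

lemma glist_F : ∀ n k : ℕ, n + 1 < k →
    glist (Fballots (n + 1) k) (k - 1) = deltaFn (n + 2) (k + 1) := by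
  intro n
  induction n with
  | zero =>
    intro k hk
    obtain ⟨K, rfl⟩ : ∃ K, k = K + 2 := ⟨k - 2, by omega⟩
    show glist [Dset (K + 1) ∪ {Cand.a}, Dset K ∪ {Cand.b}] (K + 1) = deltaFn 2 (K + 3)
    have us : ∀ (s : Finset Cand) (v : Cand), s ∪ {v} = insert v s := by
      intro s v; ext z; simp [or_comm]
    have e1 : (Dset (K + 1) ∪ {Cand.a}) ∩ insert Cand.a (Dset (K + 1))
        = insert Cand.a (Dset (K + 1)) := by
      rw [us, Finset.inter_self]
    have e2 : (Dset (K + 1) ∪ {Cand.a}) ∩ insert Cand.b (Dset (K + 1)) = Dset (K + 1) := by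
      rw [us]
      ext z
      simp only [Finset.mem_inter, Finset.mem_insert]
      constructor
      · rintro ⟨rfl | hz, hw | hw⟩
        · exact absurd hw (by simp)
        · exact absurd hw (a_not_Dset _)
        · exact absurd hw ((mem_Dset hz).2.1)
        · exact hw
      · intro hz
        exact ⟨Or.inr hz, Or.inr hz⟩
    have e3 : (Dset K ∪ {Cand.b}) ∩ insert Cand.a (Dset (K + 1)) = Dset K := by
      rw [us]
      ext z
      simp only [Finset.mem_inter, Finset.mem_insert]
      constructor
      · rintro ⟨rfl | hz, hw | hw⟩
        · exact absurd hw (by simp)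
        · exact absurd hw (b_not_Dset _)
        · exact absurd hw ((mem_Dset hz).1)
        · exact hz
      · intro hz
        exact ⟨Or.inr hz, Or.inr (Dset_mono (Nat.le_succ K) hz)⟩
    have e4 : (Dset K ∪ {Cand.b}) ∩ insert Cand.b (Dset (K + 1)) = insert Cand.b (Dset K) := by
      rw [us]
      ext z
      simp only [Finset.mem_inter, Finset.mem_insert]
      constructor
      · rintro ⟨rfl | hz, _⟩
        · exact Or.inl rfl
        · exact Or.inr hz
      · rintro (rfl | hz)
        · exact ⟨Or.inl rfl, Or.inl rfl⟩
        · exact ⟨Or.inr hz, Or.inr (Dset_mono (Nat.le_succ K) hz)⟩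
    unfold glist
    rw [List.map_cons, List.map_cons, List.map_nil, List.sum_cons, List.sum_cons, List.sum_nil]
    rw [e1, e2, e3, e4]
    rw [Finset.card_insert_of_notMem (a_not_Dset _), Finset.card_insert_of_notMem (b_not_Dset _),
      card_Dset, card_Dset]
    unfold deltaFn
    rw [Finset.prod_range_succ, Finset.prod_range_succ, Finset.prod_range_one]
    push_cast
    have h1 : ((K : ℚ) + 1) ≠ 0 := by positivity
    have h2 : ((K : ℚ) + 2) ≠ 0 := by positivity
    have h3 : ((K : ℚ) + 3) ≠ 0 := by positivity
    rw [show ((K:ℚ) + 3 - 0) = (K:ℚ) + 3 by ring, show ((K:ℚ) + 3 - 1) = (K:ℚ) + 2 by ring,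
      show ((K:ℚ) + 3 - 2) = (K:ℚ) + 1 by ring]
    field_simp
    ring
  | succ m ih =>
    intro k hk
    show glist ((Fballots (m + 1) k).map (Finset.image swapAB) ++ Fballots (m + 1) (k - 1))
        (k - 1) = deltaFn (m + 3) (k + 1)
    rw [glist_append, glist_swap, ih k (by omega)]
    have hsub : ∀ A ∈ Fballots (m + 1) (k - 1), A ⊆ Dset (k - 2) ∪ {Cand.a, Cand.b} := by
      intro A hA
      have := Fballots_subset (m + 1) (k - 1) A hA
      rwa [Nat.sub_sub] at this
    have hm : k - 2 ≤ k - 1 := by omega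
    rw [glist_congr_param hm hsub]
    have h2 : k - 2 = (k - 1) - 1 := by omega
    rw [h2, ih (k - 1) (by omega)]
    have hk1 : (k - 1) + 1 = k := by omega
    rw [hk1]
    have := deltaFn_rec (m + 2) k (by omega)
    linarith


/-- harmonic number -/
def harm (n : ℕ) : ℚ := ∑ j ∈ Finset.range n, (1 : ℚ) / (j + 1)

lemma harm_succ (n : ℕ) : harm (n + 1) = harm n + 1 / ((n : ℚ) + 1) := by
  unfold harm
  rw [Finset.sum_range_succ]

lemma sum_map_comb {α : Type*} (L : List α) (f g h i : α → ℚ) :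
    ((L.map f).sum + (L.map g).sum) - ((L.map h).sum + (L.map i).sum)
      = (L.map fun a => f a + g a - h a - i a).sum := by
  induction L with
  | nil => simp
  | cons a t ih => simp only [List.map_cons, List.sum_cons]; rw [← ih]; ring

lemma notMem_cl_x (m : ℕ) : Cand.x ∉ Dset m ∪ {Cand.a, Cand.b} := by
  simp [x_not_Dset]

lemma notMem_cl_y (m : ℕ) : Cand.y ∉ Dset m ∪ {Cand.a, Cand.b} := by
  simp [y_not_Dset]

lemma inter_ux (B : Finset Cand) (u v : Cand) (hu : u ∉ B) (M : ℕ) :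
    B ∩ (Dset M ∪ {u, v}) = B ∩ insert v (Dset M) := by
  ext z
  simp only [Finset.mem_inter, Finset.mem_union, Finset.mem_insert, Finset.mem_singleton]
  constructor
  · rintro ⟨h1, h⟩
    refine ⟨h1, ?_⟩
    rcases h with h | h | h
    · exact Or.inr h
    · exact absurd (h ▸ h1) hu
    · exact Or.inl h
  · rintro ⟨h1, h | h⟩
    · exact ⟨h1, Or.inr (Or.inr h)⟩
    · exact ⟨h1, Or.inl h⟩

section PerBallot

variable {M : ℕ} {A : Finset Cand}

lemma hxA' (hA : A ⊆ Dset M ∪ {Cand.a, Cand.b}) : Cand.x ∉ A :=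
  fun h => notMem_cl_x M (hA h)
lemma hyA' (hA : A ⊆ Dset M ∪ {Cand.a, Cand.b}) : Cand.y ∉ A :=
  fun h => notMem_cl_y M (hA h)
lemma hS' (hA : A ⊆ Dset M ∪ {Cand.a, Cand.b}) :
    A.image swapAB ⊆ Dset M ∪ {Cand.a, Cand.b} := by
  intro z hz
  obtain ⟨w, hw, rfl⟩ := Finset.mem_image.mp hz
  exact swap_mem_cl (hA hw)
lemma hxS' (hA : A ⊆ Dset M ∪ {Cand.a, Cand.b}) : Cand.x ∉ A.image swapAB :=
  fun h => notMem_cl_x M (hS' hA h)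
lemma hyS' (hA : A ⊆ Dset M ∪ {Cand.a, Cand.b}) : Cand.y ∉ A.image swapAB :=
  fun h => notMem_cl_y M (hS' hA h)

-- W = Dset M ∪ {x, a},  W2 = Dset M ∪ {x, b}
lemma cW2_1 (hA : A ⊆ Dset M ∪ {Cand.a, Cand.b}) : ((insert Cand.x (A.image swapAB)) ∩ (Dset M ∪ {Cand.x, Cand.b})).card
    = (A ∩ insert Cand.a (Dset M)).card + 1 := by
  rw [Finset.insert_inter_of_mem (by simp : Cand.x ∈ Dset M ∪ {Cand.x, Cand.b}),
    inter_ux _ _ _ (hxS' hA) M,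
    Finset.card_insert_of_notMem (fun h => (hxS' hA) (Finset.mem_inter.mp h).1),
    card_swap_b]

lemma cW2_2 (hA : A ⊆ Dset M ∪ {Cand.a, Cand.b}) : ((insert Cand.y A) ∩ (Dset M ∪ {Cand.x, Cand.b})).card
    = (A ∩ insert Cand.b (Dset M)).card := by
  rw [Finset.insert_inter_of_notMem (by simp [y_not_Dset] : Cand.y ∉ Dset M ∪ {Cand.x, Cand.b}),
    inter_ux _ _ _ (hxA' hA) M]

lemma cW_1 (hA : A ⊆ Dset M ∪ {Cand.a, Cand.b}) : ((insert Cand.x (A.image swapAB)) ∩ (Dset M ∪ {Cand.x, Cand.a})).card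
    = (A ∩ insert Cand.b (Dset M)).card + 1 := by
  rw [Finset.insert_inter_of_mem (by simp : Cand.x ∈ Dset M ∪ {Cand.x, Cand.a}),
    inter_ux _ _ _ (hxS' hA) M,
    Finset.card_insert_of_notMem (fun h => (hxS' hA) (Finset.mem_inter.mp h).1),
    card_swap_a]

lemma cW_2 (hA : A ⊆ Dset M ∪ {Cand.a, Cand.b}) : ((insert Cand.y A) ∩ (Dset M ∪ {Cand.x, Cand.a})).card
    = (A ∩ insert Cand.a (Dset M)).card := by
  rw [Finset.insert_inter_of_notMem (by simp [y_not_Dset] : Cand.y ∉ Dset M ∪ {Cand.x, Cand.a}),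
    inter_ux _ _ _ (hxA' hA) M]

-- W' = Dset M ∪ {y, b},  W'2 = Dset M ∪ {y, a}
lemma cW2'_1 (hA : A ⊆ Dset M ∪ {Cand.a, Cand.b}) : ((insert Cand.x (A.image swapAB)) ∩ (Dset M ∪ {Cand.y, Cand.a})).card
    = (A ∩ insert Cand.b (Dset M)).card := by
  rw [Finset.insert_inter_of_notMem (by simp [x_not_Dset] : Cand.x ∉ Dset M ∪ {Cand.y, Cand.a}),
    inter_ux _ _ _ (hyS' hA) M, card_swap_a]

lemma cW2'_2 (hA : A ⊆ Dset M ∪ {Cand.a, Cand.b}) : ((insert Cand.y A) ∩ (Dset M ∪ {Cand.y, Cand.a})).card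
    = (A ∩ insert Cand.a (Dset M)).card + 1 := by
  rw [Finset.insert_inter_of_mem (by simp : Cand.y ∈ Dset M ∪ {Cand.y, Cand.a}),
    inter_ux _ _ _ (hyA' hA) M,
    Finset.card_insert_of_notMem (fun h => (hyA' hA) (Finset.mem_inter.mp h).1)]

lemma cW'_1 (hA : A ⊆ Dset M ∪ {Cand.a, Cand.b}) : ((insert Cand.x (A.image swapAB)) ∩ (Dset M ∪ {Cand.y, Cand.b})).card
    = (A ∩ insert Cand.a (Dset M)).card := by
  rw [Finset.insert_inter_of_notMem (by simp [x_not_Dset] : Cand.x ∉ Dset M ∪ {Cand.y, Cand.b}),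
    inter_ux _ _ _ (hyS' hA) M, card_swap_b]

lemma cW'_2 (hA : A ⊆ Dset M ∪ {Cand.a, Cand.b}) : ((insert Cand.y A) ∩ (Dset M ∪ {Cand.y, Cand.b})).card
    = (A ∩ insert Cand.b (Dset M)).card + 1 := by
  rw [Finset.insert_inter_of_mem (by simp : Cand.y ∈ Dset M ∪ {Cand.y, Cand.b}),
    inter_ux _ _ _ (hyA' hA) M,
    Finset.card_insert_of_notMem (fun h => (hyA' hA) (Finset.mem_inter.mp h).1)]

end PerBallot

lemma erase_W (M : ℕ) :
    insert Cand.b ((Dset M ∪ {Cand.x, Cand.a}).erase Cand.a) = Dset M ∪ {Cand.x, Cand.b} := by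
  ext z
  simp only [Finset.mem_insert, Finset.mem_erase, Finset.mem_union, Finset.mem_singleton]
  constructor
  · rintro (rfl | ⟨hne, h | h | h⟩)
    · exact Or.inr (Or.inr rfl)
    · exact Or.inl h
    · exact Or.inr (Or.inl h)
    · exact absurd h hne
  · rintro (h | h | h)
    · exact Or.inr ⟨(mem_Dset h).1, Or.inl h⟩
    · exact Or.inr ⟨by rw [h]; simp, Or.inr (Or.inl h)⟩
    · exact Or.inl h

lemma erase_W' (M : ℕ) :
    insert Cand.a ((Dset M ∪ {Cand.y, Cand.b}).erase Cand.b) = Dset M ∪ {Cand.y, Cand.a} := by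
  ext z
  simp only [Finset.mem_insert, Finset.mem_erase, Finset.mem_union, Finset.mem_singleton]
  constructor
  · rintro (rfl | ⟨hne, h | h | h⟩)
    · exact Or.inr (Or.inr rfl)
    · exact Or.inl h
    · exact Or.inr (Or.inl h)
    · exact absurd h hne
  · rintro (h | h | h)
    · exact Or.inr ⟨(mem_Dset h).2.1, Or.inl h⟩
    · exact Or.inr ⟨by rw [h]; simp, Or.inr (Or.inl h)⟩
    · exact Or.inl h

lemma pavscL_eq (L : List (Finset Cand)) (W : Finset Cand) :
    pavscL L W = (L.map fun A => harm ((A ∩ W).card)).sum := rfl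


/-- For `2 ≤ j < k`, in the election `E(j,k)` with committees
`W = D_{k−2} ∪ {x, a}` and `W' = D_{k−2} ∪ {y, b}`: `Δ(W,a,b) = δ(j,k) > 0` (so `(a,b)`
is a PAV-score-improving swap for `W`) and `Δ(W',b,a) = δ(j,k) > 0` (so `(b,a)` is a
PAV-score-improving swap for `W'`). -/
theorem E_good_swaps (j k : ℕ) (hj : 2 ≤ j) (hjk : j < k) :
    pavDeltaL (Eballots j k) (Dset (k - 2) ∪ {Cand.x, Cand.a}) Cand.a Cand.b
      = deltaFn j k ∧
    pavDeltaL (Eballots j k) (Dset (k - 2) ∪ {Cand.y, Cand.b}) Cand.b Cand.a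
      = deltaFn j k ∧
    0 < deltaFn j k := by
  obtain ⟨n, rfl⟩ : ∃ n, j = n + 2 := ⟨j - 2, by omega⟩
  have hsub : ∀ A ∈ Fballots (n + 1) (k - 1), A ⊆ Dset (k - 2) ∪ {Cand.a, Cand.b} := by
    intro A hA
    have := Fballots_subset (n + 1) (k - 1) A hA
    rwa [Nat.sub_sub] at this
  have hglist : glist (Fballots (n + 1) (k - 1)) (k - 2) = deltaFn (n + 2) k := by
    have h1 : n + 1 < k - 1 := by omega
    have := glist_F n (k - 1) h1
    rw [Nat.sub_sub, show (k - 1) + 1 = k by omega] at this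
    exact this
  have hEb : Eballots (n + 2) k =
      (Fballots (n + 1) (k - 1)).map (fun A => insert Cand.x (A.image swapAB)) ++
      (Fballots (n + 1) (k - 1)).map (fun A => insert Cand.y A) := rfl
  refine ⟨?_, ?_, deltaFn_pos (by omega)⟩
  · rw [pavDeltaL, erase_W (k - 2), hEb, pavscL_eq, pavscL_eq]
    simp only [List.map_append, List.sum_append, List.map_map, Function.comp]
    rw [sum_map_comb]
    rw [← hglist]
    unfold glist
    congr 1
    apply List.map_congr_left
    intro A hA
    have h := hsub A hA
    simp only [Function.comp_apply]
    rw [cW2_1 h, cW2_2 h, cW_1 h, cW_2 h, harm_succ, harm_succ]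
    push_cast
    ring
  · rw [pavDeltaL, erase_W' (k - 2), hEb, pavscL_eq, pavscL_eq]
    simp only [List.map_append, List.sum_append, List.map_map, Function.comp]
    rw [sum_map_comb]
    rw [← hglist]
    unfold glist
    congr 1
    apply List.map_congr_left
    intro A hA
    have h := hsub A hA
    simp only [Function.comp_apply]
    rw [cW2'_1 h, cW2'_2 h, cW'_1 h, cW'_2 h, harm_succ, harm_succ]
    push_cast
    ring
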